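/- Let Y1 and Y2 be finitely-supported random variables. Then H∞(Y1) ≥ H̃∞(Y1 | Y2) ≥ H∞(Y1) - log2(|supp(Y2)|), where supp(Y2) is the support of Y2. -/

import Mathlib

/-!
Write `M = max_a Pr[Y1 = a]` and `S = ∑_b max_a Pr[Y1 = a, Y2 = b]`, so that `H∞(Y1) = -log₂ M`
and `H̃∞(Y1 | Y2) = -log₂ S`. A maximum of sums is at most the sum of the maxima, so `M ≤ S`.
Conversely only the `b` in the support of `Y2` contribute to `S`, and each contributes at most
`max_a Pr[Y1 = a, Y2 = b] ≤ max_a Pr[Y1 = a] = M`, so `S ≤ |supp Y2| · M`. Taking `-log₂` gives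
both inequalities.
-/

open scoped Classical
open Finset

/-- Min-entropy of `Y1` for a joint finitely-supported distribution `μ` on `A × B`:
`H∞(Y1) = -log2 (max_a Pr[Y1 = a])`. -/
noncomputable def HinfFst {A B : Type*} [Fintype A] [Fintype B] [Nonempty A]
    (μ : A × B → ℝ) : ℝ :=
  -Real.logb 2 (univ.sup' univ_nonempty fun a : A => ∑ b : B, μ (a, b))

/-- Average min-entropy `H̃∞(Y1 | Y2) = -log2 (E_{Y2}[max_a Pr[Y1 = a | Y2]])
  = -log2 (∑_b max_a Pr[Y1 = a ∧ Y2 = b])`. -/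
noncomputable def HtildeInf {A B : Type*} [Fintype A] [Fintype B] [Nonempty A]
    (μ : A × B → ℝ) : ℝ :=
  -Real.logb 2 (∑ b : B, univ.sup' univ_nonempty fun a : A => μ (a, b))

namespace Finset

variable {A B : Type*}

theorem sup'_le_sum_of_nonneg {s : Finset A} (hs : s.Nonempty) {g : A → ℝ}
    (hg : ∀ a ∈ s, 0 ≤ g a) : s.sup' hs g ≤ ∑ a ∈ s, g a :=
  sup'_le hs g fun _ ha => single_le_sum hg ha

theorem sup'_sum_le_sum_sup' {s : Finset A} (hs : s.Nonempty) (t : Finset B)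
    (f : A → B → ℝ) :
    (s.sup' hs fun a => ∑ b ∈ t, f a b) ≤ ∑ b ∈ t, s.sup' hs fun a => f a b :=
  sup'_le hs _ fun _ ha => sum_le_sum fun b _ => le_sup' (fun a => f a b) ha

theorem sum_sup'_le_card_support_mul_sup'_sum {s : Finset A} (hs : s.Nonempty)
    {t : Finset B} {f : A → B → ℝ} (hf : ∀ a ∈ s, ∀ b ∈ t, 0 ≤ f a b) :
    ∑ b ∈ t, s.sup' hs (fun a => f a b) ≤
      #{b ∈ t | ∑ a ∈ s, f a b ≠ 0} * s.sup' hs fun a => ∑ b ∈ t, f a b := by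
  have hcol_zero : ∀ b ∈ t, ∑ a ∈ s, f a b = 0 → s.sup' hs (fun a => f a b) = 0 := by
    intro b hb hzero
    obtain ⟨a, ha⟩ := hs
    refine le_antisymm ?_ ?_
    · exact hzero ▸ sup'_le_sum_of_nonneg _ fun a ha => hf a ha b hb
    · exact (hf a ha b hb).trans (le_sup' (fun a => f a b) ha)
  have hcol_le : ∀ b ∈ t, s.sup' hs (fun a => f a b) ≤ s.sup' hs fun a => ∑ b ∈ t, f a b :=
    fun b hb => sup'_le hs _ fun a ha =>
      (single_le_sum (hf a ha) hb).trans (le_sup' (fun a => ∑ b ∈ t, f a b) ha)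
  rw [← sum_filter_of_ne fun b hb hne => mt (hcol_zero b hb) hne, ← nsmul_eq_mul]
  exact sum_le_card_nsmul _ _ _ fun b hb => hcol_le b (mem_filter.1 hb).1

end Finset

theorem stmt_7_general {A B : Type*} [Fintype A] [Fintype B] [Nonempty A]
    (μ : A × B → ℝ) (hpos : ∀ ab, 0 ≤ μ ab) (hsum : ∑ ab : A × B, μ ab = 1) :
    HinfFst μ ≥ HtildeInf μ ∧
    HtildeInf μ ≥ HinfFst μ -
      Real.logb 2 ((univ.filter fun b : B => ∑ a : A, μ (a, b) ≠ 0).card) := by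
  set M := univ.sup' univ_nonempty fun a : A => ∑ b : B, μ (a, b)
  set S := ∑ b : B, univ.sup' univ_nonempty fun a : A => μ (a, b)
  set K : ℝ := ((univ.filter fun b : B => ∑ a : A, μ (a, b) ≠ 0).card : ℝ)
  have hM : 0 < M := by
    by_contra! hM
    have : ∑ a : A, ∑ b : B, μ (a, b) ≤ 0 :=
      sum_nonpos fun a ha => (le_sup' (fun a => ∑ b : B, μ (a, b)) ha).trans hM
    rw [← Fintype.sum_prod_type, hsum] at this
    linarith
  have hMS : M ≤ S := sup'_sum_le_sum_sup' _ _ fun a b => μ (a, b)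
  have hSK : S ≤ K * M := sum_sup'_le_card_support_mul_sup'_sum _ fun a _ b _ => hpos (a, b)
  have hK : 0 < K := pos_of_mul_pos_left ((hM.trans_le hMS).trans_le hSK) hM.le
  have hlogMS := Real.logb_le_logb_of_le one_lt_two hM hMS
  have hlogSK := Real.logb_le_logb_of_le one_lt_two (hM.trans_le hMS) hSK
  rw [Real.logb_mul hK.ne' hM.ne'] at hlogSK
  unfold HinfFst HtildeInf
  constructor <;> linarith

/-- `H∞(Y1) ≥ H̃∞(Y1 | Y2) ≥ H∞(Y1) - log2 |supp(Y2)|`. -/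
theorem stmt_7 {A B : Type*} [Fintype A] [Fintype B] [Nonempty A] [Nonempty B]
    (μ : A × B → ℝ) (hpos : ∀ ab, 0 ≤ μ ab) (hsum : ∑ ab : A × B, μ ab = 1) :
    HinfFst μ ≥ HtildeInf μ ∧
    HtildeInf μ ≥ HinfFst μ -
      Real.logb 2 ((univ.filter fun b : B => ∑ a : A, μ (a, b) ≠ 0).card) :=
  stmt_7_general μ hpos hsum
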